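/- arXiv:2307.15996 — 2 statements merged into one kernel-verified Lean document; each statement's English description precedes it below -/
import Mathlib

section
/- If the 6×6 grid admits a locked 3-omino tiling, then for all positive integers a, b, the 6a×6b grid admits a locked 3-omino tiling, obtained by placing suitably reflected copies of the 6×6 tiling in an a×b array of blocks. -/
/-- Orthogonal adjacency of cells in the grid (coordinates in ℕ). -/
def Adj (p q : ℕ × ℕ) : Prop :=
  (p.1 = q.1 ∧ (p.2 + 1 = q.2 ∨ q.2 + 1 = p.2)) ∨
  (p.2 = q.2 ∧ (p.1 + 1 = q.1 ∨ q.1 + 1 = p.1))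

/-- A finite set of cells is connected (under orthogonal adjacency, staying inside the set). -/
def ConnectedIn (S : Finset (ℕ × ℕ)) : Prop :=
  ∀ p ∈ S, ∀ q ∈ S, Relation.ReflTransGen (fun a b => a ∈ S ∧ b ∈ S ∧ Adj a b) p q

/-- The cells of the m × n grid. -/
def gridCells (m n : ℕ) : Finset (ℕ × ℕ) := Finset.range m ×ˢ Finset.range n

/-- A tiling of the m × n grid by t-ominoes: a partition of the cells into
connected pieces of size t. -/
structure Tiling (m n t : ℕ) where
  tiles : Finset (Finset (ℕ × ℕ))
  covers : ∀ c ∈ gridCells m n, ∃! T, T ∈ tiles ∧ c ∈ T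
  subset : ∀ T ∈ tiles, T ⊆ gridCells m n
  card_tile : ∀ T ∈ tiles, T.card = t
  conn : ∀ T ∈ tiles, ConnectedIn T

/-- Recombination adjacency in the metagraph: the two tilings differ on exactly two tiles. -/
def MetaAdj {m n t : ℕ} (T₁ T₂ : Tiling m n t) : Prop :=
  (T₁.tiles \ T₂.tiles).card = 2 ∧ (T₂.tiles \ T₁.tiles).card = 2

/-- A tiling is locked if no two distinct tiles can be merged and re-split differently:
the only partition of the union of two tiles into two disjoint connected t-cell sets is
the original one. -/
def Locked {m n t : ℕ} (T : Tiling m n t) : Prop :=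
  ∀ T₁ ∈ T.tiles, ∀ T₂ ∈ T.tiles, T₁ ≠ T₂ →
    ∀ S₁ S₂ : Finset (ℕ × ℕ), S₁.card = t → S₂.card = t →
      ConnectedIn S₁ → ConnectedIn S₂ → Disjoint S₁ S₂ → S₁ ∪ S₂ = T₁ ∪ T₂ →
      ({S₁, S₂} : Finset (Finset (ℕ × ℕ))) = {T₁, T₂}

/-! ### Auxiliary material -/

instance : DecidableRel Adj := fun p q => by unfold Adj; infer_instance

lemma adj_symm {p q : ℕ × ℕ} (h : Adj p q) : Adj q p := by
  unfold Adj at h ⊢; tauto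

lemma mem_grid {c : ℕ × ℕ} {m n : ℕ} : c ∈ gridCells m n ↔ c.1 < m ∧ c.2 < n := by
  simp [gridCells, Finset.mem_product]

/-- Every cell of `S` has a neighbour inside `S`. -/
def Deg1 (S : Finset (ℕ × ℕ)) : Prop := ∀ a ∈ S, ∃ b ∈ S, Adj a b

instance (S : Finset (ℕ × ℕ)) : Decidable (Deg1 S) := by unfold Deg1; infer_instance

/-- Decidable core of the "locked pair" condition. -/
def GP (A B : Finset (ℕ × ℕ)) : Prop :=
  ∀ S₁ ∈ (A ∪ B).powerset, S₁.card = 3 → Deg1 S₁ → Deg1 ((A ∪ B) \ S₁) →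
    (S₁ = A ∨ S₁ = B)

instance (A B : Finset (ℕ × ℕ)) : Decidable (GP A B) := by unfold GP; infer_instance

/-- A 3-cell chain. -/
def IsChain3 (T : Finset (ℕ × ℕ)) : Prop :=
  ∃ x ∈ T, ∃ y ∈ T, ∃ z ∈ T, T = {x, y, z} ∧ Adj x y ∧ Adj y z

instance (T : Finset (ℕ × ℕ)) : Decidable (IsChain3 T) := by unfold IsChain3; infer_instance

lemma chain_conn {T : Finset (ℕ × ℕ)} (h : IsChain3 T) : ConnectedIn T := by
  obtain ⟨x, hx, y, hy, z, hz, hT, hxy, hyz⟩ := h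
  set r := fun a b : ℕ × ℕ => a ∈ T ∧ b ∈ T ∧ Adj a b with hr
  have rxy : Relation.ReflTransGen r x y := Relation.ReflTransGen.single ⟨hx, hy, hxy⟩
  have ryx : Relation.ReflTransGen r y x := Relation.ReflTransGen.single ⟨hy, hx, adj_symm hxy⟩
  have ryz : Relation.ReflTransGen r y z := Relation.ReflTransGen.single ⟨hy, hz, hyz⟩
  have rzy : Relation.ReflTransGen r z y := Relation.ReflTransGen.single ⟨hz, hy, adj_symm hyz⟩
  have hmem : ∀ w ∈ T, w = x ∨ w = y ∨ w = z := by
    intro w hw; rw [hT] at hw; simpa using hw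
  have reach : ∀ w ∈ T, Relation.ReflTransGen r y w := by
    intro w hw
    rcases hmem w hw with rfl | rfl | rfl
    · exact ryx
    · exact Relation.ReflTransGen.refl
    · exact ryz
  have back : ∀ w ∈ T, Relation.ReflTransGen r w y := by
    intro w hw
    rcases hmem w hw with rfl | rfl | rfl
    · exact rxy
    · exact Relation.ReflTransGen.refl
    · exact rzy
  intro p hp q hq
  exact (back p hp).trans (reach q hq)

lemma conn3_deg1 {S : Finset (ℕ × ℕ)} (h : ConnectedIn S) (hc : S.card = 3) : Deg1 S := by
  intro a ha
  have h13 : 1 < S.card := by rw [hc]; omega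
  obtain ⟨b, hb, hba⟩ := Finset.exists_mem_ne h13 a
  rcases (h a ha b hb).cases_head with heq | ⟨c, hc', _⟩
  · exact absurd heq.symm hba
  · exact ⟨c, hc'.2.1, hc'.2.2⟩

/-- The "locked pair" property, in the language of the `Locked` definition. -/
def GoodPair (A B : Finset (ℕ × ℕ)) : Prop :=
  ∀ S₁ S₂ : Finset (ℕ × ℕ), S₁.card = 3 → S₂.card = 3 →
    ConnectedIn S₁ → ConnectedIn S₂ → Disjoint S₁ S₂ → S₁ ∪ S₂ = A ∪ B →
    ({S₁, S₂} : Finset (Finset (ℕ × ℕ))) = {A, B}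

lemma union_sdiff_left' {s t : Finset (ℕ × ℕ)} (h : Disjoint s t) : (s ∪ t) \ s = t := by
  ext x
  simp only [Finset.mem_sdiff, Finset.mem_union]
  constructor
  · rintro ⟨h1 | h1, h2⟩
    · exact absurd h1 h2
    · exact h1
  · intro hx
    exact ⟨Or.inr hx, fun hs => Finset.disjoint_left.mp h hs hx⟩

lemma union_sdiff_right' {s t : Finset (ℕ × ℕ)} (h : Disjoint s t) : (s ∪ t) \ t = s := by
  rw [Finset.union_comm]; exact union_sdiff_left' h.symm

lemma partner_eq {A B S₁ S₂ : Finset (ℕ × ℕ)} (hds : Disjoint S₁ S₂)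
    (hu : S₁ ∪ S₂ = A ∪ B) : S₂ = (A ∪ B) \ S₁ := by
  rw [← hu]; exact (union_sdiff_left' hds).symm

lemma pair_finish {A B S₁ S₂ : Finset (ℕ × ℕ)} (hd : Disjoint A B) (hds : Disjoint S₁ S₂)
    (hu : S₁ ∪ S₂ = A ∪ B) (h : S₁ = A ∨ S₁ = B) :
    ({S₁, S₂} : Finset (Finset (ℕ × ℕ))) = {A, B} := by
  have hS2 := partner_eq hds hu
  rcases h with rfl | rfl
  · rw [hS2, union_sdiff_left' hd]
  · rw [hS2, union_sdiff_right' hd, Finset.pair_comm]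

lemma gp_bridge {A B : Finset (ℕ × ℕ)} (hgp : GP A B) (hd : Disjoint A B)
    (hA : A.card = 3) (hB : B.card = 3) : GoodPair A B := by
  intro S₁ S₂ hc1 hc2 hk1 hk2 hds hu
  have hsub : S₁ ⊆ A ∪ B := hu ▸ Finset.subset_union_left
  have hS2 := partner_eq hds hu
  have h := hgp S₁ (Finset.mem_powerset.mpr hsub) hc1 (conn3_deg1 hk1 hc1)
    (hS2 ▸ conn3_deg1 hk2 hc2)
  exact pair_finish hd hds hu h

/-- Two tiles with no adjacency between them always form a locked pair. -/
lemma nonadj_good {T₁ T₂ : Finset (ℕ × ℕ)} (hd : Disjoint T₁ T₂)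
    (h1 : T₁.card = 3) (h2 : T₂.card = 3)
    (hno : ∀ p ∈ T₁, ∀ q ∈ T₂, ¬ Adj p q) : GoodPair T₁ T₂ := by
  intro S₁ S₂ hc1 hc2 hk1 hk2 hds hu
  have key : ∀ S : Finset (ℕ × ℕ), S ⊆ T₁ ∪ T₂ → ConnectedIn S → S.card = 3 →
      S = T₁ ∨ S = T₂ := by
    intro S hsub hk hc
    have hne : S.Nonempty := by rw [← Finset.card_pos, hc]; omega
    obtain ⟨x, hx⟩ := hne
    have side : ∀ w ∈ S, w ∈ T₁ ∨ w ∈ T₂ := fun w hw => Finset.mem_union.mp (hsub hw)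
    rcases side x hx with hx1 | hx2
    · left
      have hsub1 : S ⊆ T₁ := by
        intro q hq
        have hpath := hk x hx q hq
        clear hq
        induction hpath with
        | refl => exact hx1
        | tail _ hstep ih =>
          rcases side _ hstep.2.1 with hc1' | hc2'
          · exact hc1'
          · exact absurd hstep.2.2 (hno _ ih _ hc2')
      exact Finset.eq_of_subset_of_card_le hsub1 (by rw [h1, hc])
    · right
      have hsub2 : S ⊆ T₂ := by
        intro q hq
        have hpath := hk x hx q hq
        clear hq
        induction hpath with
        | refl => exact hx2
        | tail _ hstep ih =>
          rcases side _ hstep.2.1 with hc1' | hc2'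
          · exact absurd (adj_symm hstep.2.2) (hno _ hc1' _ ih)
          · exact hc2'
      exact Finset.eq_of_subset_of_card_le hsub2 (by rw [h2, hc])
  exact pair_finish hd hds hu (key S₁ (hu ▸ Finset.subset_union_left) hk1 hc1)

/-- Mapping connectivity through an adjacency-preserving map. -/
lemma conn_image {S : Finset (ℕ × ℕ)} (f : ℕ × ℕ → ℕ × ℕ)
    (hf : ∀ p ∈ S, ∀ q ∈ S, Adj p q → Adj (f p) (f q)) (h : ConnectedIn S) :
    ConnectedIn (S.image f) := by
  intro p hp q hq
  obtain ⟨x, hx, rfl⟩ := Finset.mem_image.mp hp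
  obtain ⟨y, hy, rfl⟩ := Finset.mem_image.mp hq
  exact Relation.ReflTransGen.lift f
    (fun a b hab => ⟨Finset.mem_image_of_mem f hab.1, Finset.mem_image_of_mem f hab.2.1,
      hf a hab.1 b hab.2.1 hab.2.2⟩) _ _ (h x hx y hy)

/-! ### Translations -/

def shiftF (u v : ℕ) (p : ℕ × ℕ) : ℕ × ℕ := (p.1 + u, p.2 + v)

def shiftS (u v : ℕ) (S : Finset (ℕ × ℕ)) : Finset (ℕ × ℕ) := S.image (shiftF u v)

lemma shiftF_inj (u v : ℕ) : Function.Injective (shiftF u v) := by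
  intro p q h
  cases p; cases q
  simp only [shiftF, Prod.mk.injEq] at h ⊢
  omega

lemma shiftS_zero (S : Finset (ℕ × ℕ)) : shiftS 0 0 S = S := by
  have : shiftF 0 0 = id := funext fun p => by cases p; simp [shiftF]
  rw [shiftS, this, Finset.image_id]

lemma goodpair_shift {A B : Finset (ℕ × ℕ)} (u v : ℕ) (h : GoodPair A B) :
    GoodPair (shiftS u v A) (shiftS u v B) := by
  intro S₁ S₂ hc1 hc2 hk1 hk2 hds hu
  set us : ℕ × ℕ → ℕ × ℕ := fun p => (p.1 - u, p.2 - v) with hus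
  have husi : ∀ p : ℕ × ℕ, us (shiftF u v p) = p := by
    intro p; cases p; simp [shiftF, hus]
  have hUim : shiftS u v A ∪ shiftS u v B = (A ∪ B).image (shiftF u v) := by
    rw [Finset.image_union]; rfl
  have hsub1 : S₁ ⊆ (A ∪ B).image (shiftF u v) := by
    rw [← hUim, ← hu]; exact Finset.subset_union_left
  have hsub2 : S₂ ⊆ (A ∪ B).image (shiftF u v) := by
    rw [← hUim, ← hu]; exact Finset.subset_union_right
  have round : ∀ p ∈ (A ∪ B).image (shiftF u v), shiftF u v (us p) = p := by
    intro p hp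
    obtain ⟨q, _, rfl⟩ := Finset.mem_image.mp hp
    rw [husi]
  have himg : ∀ (S : Finset (ℕ × ℕ)), S ⊆ (A ∪ B).image (shiftF u v) →
      (S.image us).image (shiftF u v) = S := by
    intro S hS
    rw [Finset.image_image]
    calc S.image (shiftF u v ∘ us) = S.image id :=
          Finset.image_congr (fun p hp => round p (hS hp))
      _ = S := Finset.image_id
  have hinj : ∀ (S : Finset (ℕ × ℕ)), S ⊆ (A ∪ B).image (shiftF u v) →
      Set.InjOn us S := by
    intro S hS p hp q hq hpq
    have : shiftF u v (us p) = shiftF u v (us q) := by rw [hpq]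
    rwa [round p (hS hp), round q (hS hq)] at this
  have hadjdown : ∀ (S : Finset (ℕ × ℕ)), S ⊆ (A ∪ B).image (shiftF u v) →
      ∀ p ∈ S, ∀ q ∈ S, Adj p q → Adj (us p) (us q) := by
    intro S hS p hp q hq hadj
    obtain ⟨p', _, rfl⟩ := Finset.mem_image.mp (hS hp)
    obtain ⟨q', _, rfl⟩ := Finset.mem_image.mp (hS hq)
    rw [husi, husi]
    cases p'; cases q'
    simp only [Adj, shiftF] at hadj ⊢
    omega
  have hd' : Disjoint (S₁.image us) (S₂.image us) := by
    rw [Finset.disjoint_left]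
    intro x hx1 hx2
    obtain ⟨p, hp, rfl⟩ := Finset.mem_image.mp hx1
    obtain ⟨q, hq, hqe⟩ := Finset.mem_image.mp hx2
    have : p = q := by
      have h1 := round p (hsub1 hp)
      have h2 := round q (hsub2 hq)
      rw [← h1, ← h2, hqe]
    exact Finset.disjoint_left.mp hds hp (this ▸ hq)
  have huni' : S₁.image us ∪ S₂.image us = A ∪ B := by
    rw [← Finset.image_union, hu, hUim, Finset.image_image]
    calc ((A ∪ B).image (us ∘ shiftF u v)) = (A ∪ B).image id :=
          Finset.image_congr (fun p _ => husi p)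
      _ = A ∪ B := Finset.image_id
  have hpair := h (S₁.image us) (S₂.image us)
    ((Finset.card_image_of_injOn (hinj S₁ hsub1)).trans hc1)
    ((Finset.card_image_of_injOn (hinj S₂ hsub2)).trans hc2)
    (conn_image us (hadjdown S₁ hsub1) hk1)
    (conn_image us (hadjdown S₂ hsub2) hk2) hd' huni'
  have := congrArg (Finset.image (Finset.image (shiftF u v))) hpair
  simp only [Finset.image_insert, Finset.image_singleton] at this
  rw [show (S₁.image us).image (shiftF u v) = S₁ from himg S₁ hsub1,
      show (S₂.image us).image (shiftF u v) = S₂ from himg S₂ hsub2] at this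
  exact this

/-! ### The base 6×6 tilings -/

def tiles00 : Finset (Finset (ℕ × ℕ)) :=
  { {(0,0),(0,1),(1,0)}, {(0,2),(0,3),(1,2)}, {(0,4),(0,5),(1,5)},
    {(1,1),(2,1),(2,2)}, {(1,3),(1,4),(2,3)}, {(2,0),(3,0),(3,1)},
    {(2,4),(2,5),(3,5)}, {(3,2),(4,1),(4,2)}, {(3,3),(3,4),(4,4)},
    {(4,0),(5,0),(5,1)}, {(4,3),(5,2),(5,3)}, {(4,5),(5,4),(5,5)} }

def tiles10 : Finset (Finset (ℕ × ℕ)) :=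
  { {(0,0),(0,1),(1,0)}, {(0,2),(0,3),(1,3)}, {(0,4),(0,5),(1,5)},
    {(1,1),(1,2),(2,2)}, {(1,4),(2,3),(2,4)}, {(2,0),(2,1),(3,0)},
    {(2,5),(3,4),(3,5)}, {(3,1),(3,2),(4,1)}, {(3,3),(4,3),(4,4)},
    {(4,0),(5,0),(5,1)}, {(4,2),(5,2),(5,3)}, {(4,5),(5,4),(5,5)} }

def vertT : Finset (Finset (ℕ × ℕ)) :=
  { {(0,0),(0,1),(0,2)}, {(0,3),(0,4),(0,5)}, {(1,0),(1,1),(1,2)}, {(1,3),(1,4),(1,5)},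
    {(2,0),(2,1),(2,2)}, {(2,3),(2,4),(2,5)}, {(3,0),(3,1),(3,2)}, {(3,3),(3,4),(3,5)},
    {(4,0),(4,1),(4,2)}, {(4,3),(4,4),(4,5)}, {(5,0),(5,1),(5,2)}, {(5,3),(5,4),(5,5)} }

def mX (p : ℕ × ℕ) : ℕ × ℕ := (11 - p.1, p.2)
def mY (p : ℕ × ℕ) : ℕ × ℕ := (p.1, 11 - p.2)
def rX (p : ℕ × ℕ) : ℕ × ℕ := (5 - p.1, p.2)
def rY (p : ℕ × ℕ) : ℕ × ℕ := (p.1, 5 - p.2)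

def Base (F : Finset (Finset (ℕ × ℕ))) : Prop :=
  (∀ T ∈ F, T ⊆ gridCells 6 6) ∧ (∀ T ∈ F, T.card = 3) ∧ (∀ T ∈ F, IsChain3 T) ∧
  (∀ c ∈ gridCells 6 6, ∃ T ∈ F, c ∈ T) ∧
  (∀ T ∈ F, ∀ T' ∈ F, T ≠ T' → ∀ c ∈ T, c ∉ T')

instance (F : Finset (Finset (ℕ × ℕ))) : Decidable (Base F) := by
  unfold Base gridCells; infer_instance

set_option maxHeartbeats 4000000 in
theorem base00 : Base tiles00 := by decide

set_option maxHeartbeats 4000000 in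
theorem base10 : Base tiles10 := by decide

set_option maxHeartbeats 4000000 in
theorem baseV : Base vertT := by decide

theorem imgX00 : tiles00.image (Finset.image rX) = tiles10 := by decide
theorem imgX10 : tiles10.image (Finset.image rX) = tiles00 := by decide
theorem imgY00 : tiles00.image (Finset.image rY) = tiles10 := by decide
theorem imgY10 : tiles10.image (Finset.image rY) = tiles00 := by decide

set_option maxHeartbeats 8000000 in
set_option maxRecDepth 100000 in
theorem pairs00 : ∀ A ∈ tiles00, ∀ B ∈ tiles00, A ≠ B →
    (∃ p ∈ A, ∃ q ∈ B, Adj p q) → GP A B := by decide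

set_option maxHeartbeats 8000000 in
set_option maxRecDepth 100000 in
theorem pairs10 : ∀ A ∈ tiles10, ∀ B ∈ tiles10, A ≠ B →
    (∃ p ∈ A, ∃ q ∈ B, Adj p q) → GP A B := by decide

set_option maxHeartbeats 8000000 in
set_option maxRecDepth 100000 in
theorem border00 : ∀ A ∈ tiles00,
    ((∃ p ∈ A, p.1 = 5) → GP A (A.image mX) ∧ ∀ c ∈ A, c ∉ A.image mX) ∧
    ((∃ p ∈ A, p.2 = 5) → GP A (A.image mY) ∧ ∀ c ∈ A, c ∉ A.image mY) := by decide

set_option maxHeartbeats 8000000 in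
set_option maxRecDepth 100000 in
theorem border10 : ∀ A ∈ tiles10,
    ((∃ p ∈ A, p.1 = 5) → GP A (A.image mX) ∧ ∀ c ∈ A, c ∉ A.image mX) ∧
    ((∃ p ∈ A, p.2 = 5) → GP A (A.image mY) ∧ ∀ c ∈ A, c ∉ A.image mY) := by decide

/-- The pattern of blocks: every other block is flipped (the tiling `tiles00` happens to be
invariant under 180° rotation, so only the parity of `i+j` matters). -/
def pat0 (i j : ℕ) : Finset (Finset (ℕ × ℕ)) :=
  if (i + j) % 2 = 0 then tiles00 else tiles10

lemma pat0_cases (i j : ℕ) : pat0 i j = tiles00 ∨ pat0 i j = tiles10 := by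
  unfold pat0; split <;> simp

lemma base_pat0 (i j : ℕ) : Base (pat0 i j) := by
  rcases pat0_cases i j with h | h <;> rw [h]
  · exact base00
  · exact base10

lemma pairs_pat0 {i j : ℕ} : ∀ A ∈ pat0 i j, ∀ B ∈ pat0 i j, A ≠ B →
    (∃ p ∈ A, ∃ q ∈ B, Adj p q) → GP A B := by
  rcases pat0_cases i j with h | h <;> rw [h]
  · exact pairs00
  · exact pairs10

lemma border_pat0 {i j : ℕ} : ∀ A ∈ pat0 i j,
    ((∃ p ∈ A, p.1 = 5) → GP A (A.image mX) ∧ ∀ c ∈ A, c ∉ A.image mX) ∧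
    ((∃ p ∈ A, p.2 = 5) → GP A (A.image mY) ∧ ∀ c ∈ A, c ∉ A.image mY) := by
  rcases pat0_cases i j with h | h <;> rw [h]
  · exact border00
  · exact border10

lemma pat0_succX (i j : ℕ) : pat0 (i + 1) j = (pat0 i j).image (Finset.image rX) := by
  by_cases h : (i + j) % 2 = 0
  · rw [show pat0 i j = tiles00 from if_pos h,
      show pat0 (i+1) j = tiles10 from if_neg (by omega), imgX00]
  · rw [show pat0 i j = tiles10 from if_neg h,
      show pat0 (i+1) j = tiles00 from if_pos (by omega), imgX10]

lemma pat0_succY (i j : ℕ) : pat0 i (j + 1) = (pat0 i j).image (Finset.image rY) := by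
  by_cases h : (i + j) % 2 = 0
  · rw [show pat0 i j = tiles00 from if_pos h,
      show pat0 i (j+1) = tiles10 from if_neg (by omega), imgY00]
  · rw [show pat0 i j = tiles10 from if_neg h,
      show pat0 i (j+1) = tiles00 from if_pos (by omega), imgY10]

/-! ### The big tiling -/

def bigT (pat : ℕ → ℕ → Finset (Finset (ℕ × ℕ))) (a b : ℕ) : Finset (Finset (ℕ × ℕ)) :=
  (Finset.range a ×ˢ Finset.range b).biUnion fun ij =>
    (pat ij.1 ij.2).image (shiftS (6 * ij.1) (6 * ij.2))

lemma mem_bigT {pat : ℕ → ℕ → Finset (Finset (ℕ × ℕ))} {a b : ℕ} {T : Finset (ℕ × ℕ)} :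
    T ∈ bigT pat a b ↔
      ∃ i, i < a ∧ ∃ j, j < b ∧ ∃ A ∈ pat i j, T = shiftS (6 * i) (6 * j) A := by
  constructor
  · intro h
    obtain ⟨ij, hij, hT⟩ := Finset.mem_biUnion.mp h
    obtain ⟨A, hA, hAe⟩ := Finset.mem_image.mp hT
    rw [Finset.mem_product, Finset.mem_range, Finset.mem_range] at hij
    exact ⟨ij.1, hij.1, ij.2, hij.2, A, hA, hAe.symm⟩
  · rintro ⟨i, hi, j, hj, A, hA, rfl⟩
    exact Finset.mem_biUnion.mpr ⟨(i, j),
      Finset.mem_product.mpr ⟨Finset.mem_range.mpr hi, Finset.mem_range.mpr hj⟩,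
      Finset.mem_image_of_mem _ hA⟩

def mkTiling (pat : ℕ → ℕ → Finset (Finset (ℕ × ℕ))) (hbase : ∀ i j, Base (pat i j))
    (a b : ℕ) : Tiling (6 * a) (6 * b) 3 where
  tiles := bigT pat a b
  covers := by
    intro c hc
    rw [mem_grid] at hc
    obtain ⟨A, hA, hcA⟩ := (hbase (c.1 / 6) (c.2 / 6)).2.2.2.1 (c.1 % 6, c.2 % 6)
      (mem_grid.mpr ⟨by omega, by omega⟩)
    refine ⟨shiftS (6 * (c.1 / 6)) (6 * (c.2 / 6)) A, ⟨?_, ?_⟩, ?_⟩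
    · exact mem_bigT.mpr ⟨c.1 / 6, by omega, c.2 / 6, by omega, A, hA, rfl⟩
    · exact Finset.mem_image.mpr ⟨(c.1 % 6, c.2 % 6), hcA, by
        cases c; simp only [shiftF, Prod.mk.injEq]; omega⟩
    · rintro T' ⟨hT', hcT'⟩
      obtain ⟨i', hi', j', hj', B, hB, rfl⟩ := mem_bigT.mp hT'
      obtain ⟨β, hβ, hβe⟩ := Finset.mem_image.mp hcT'
      have hβg := mem_grid.mp ((hbase i' j').1 B hB hβ)
      obtain ⟨x, y⟩ := c
      obtain ⟨bx, by'⟩ := β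
      simp only [shiftF, Prod.mk.injEq] at hβe
      obtain ⟨he1, he2⟩ := hβe
      simp only at hβg
      have hi : i' = x / 6 := by omega
      have hj : j' = y / 6 := by omega
      have hbx : bx = x % 6 := by omega
      have hby : by' = y % 6 := by omega
      subst hi hj hbx hby
      have hBA : B = A := by
        by_contra hne
        exact (hbase (x / 6) (y / 6)).2.2.2.2 B hB A hA hne (x % 6, y % 6) hβ hcA
      rw [hBA]
  subset := by
    intro T hT
    obtain ⟨i, hi, j, hj, A, hA, rfl⟩ := mem_bigT.mp hT
    intro c hc
    obtain ⟨α, hα, rfl⟩ := Finset.mem_image.mp hc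
    have hαg := mem_grid.mp ((hbase i j).1 A hA hα)
    rw [mem_grid]
    simp only [shiftF]
    constructor <;> omega
  card_tile := by
    intro T hT
    obtain ⟨i, hi, j, hj, A, hA, rfl⟩ := mem_bigT.mp hT
    rw [shiftS, Finset.card_image_of_injective A (shiftF_inj _ _)]
    exact (hbase i j).2.1 A hA
  conn := by
    intro T hT
    obtain ⟨i, hi, j, hj, A, hA, rfl⟩ := mem_bigT.mp hT
    exact conn_image _ (fun p _ q _ h => by
        cases p; cases q; simp only [Adj, shiftF] at h ⊢; omega)
      (chain_conn ((hbase i j).2.2.1 A hA))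

lemma tiling_disjoint {m n t : ℕ} (T : Tiling m n t) {T₁ T₂ : Finset (ℕ × ℕ)}
    (h1 : T₁ ∈ T.tiles) (h2 : T₂ ∈ T.tiles) (hne : T₁ ≠ T₂) : Disjoint T₁ T₂ := by
  rw [Finset.disjoint_left]
  intro c hc1 hc2
  obtain ⟨U, _, huniq⟩ := T.covers c (T.subset T₁ h1 hc1)
  exact hne ((huniq T₁ ⟨h1, hc1⟩).trans (huniq T₂ ⟨h2, hc2⟩).symm)

/-! ### The cross-boundary locked pairs -/

lemma crossX (i j : ℕ) {A B : Finset (ℕ × ℕ)} (hA : A ∈ pat0 i j) (hB : B ∈ pat0 (i + 1) j)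
    (t : ℕ) (h5 : (5, t) ∈ A) (h0 : (0, t) ∈ B) :
    GoodPair (shiftS (6 * i) (6 * j) A) (shiftS (6 * (i + 1)) (6 * j) B) := by
  rw [pat0_succX i j] at hB
  obtain ⟨B₀, hB₀, rfl⟩ := Finset.mem_image.mp hB
  have hsub₀ : B₀ ⊆ gridCells 6 6 := (base_pat0 i j).1 B₀ hB₀
  obtain ⟨γ, hγ, hγe⟩ := Finset.mem_image.mp h0
  have hγg := mem_grid.mp (hsub₀ hγ)
  have hγ5 : γ = (5, t) := by
    obtain ⟨gx, gy⟩ := γ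
    simp only [rX, Prod.mk.injEq] at hγe
    simp only at hγg
    simp only [Prod.mk.injEq]
    omega
  subst hγ5
  have hAB : A = B₀ := by
    by_contra hne
    exact (base_pat0 i j).2.2.2.2 A hA B₀ hB₀ hne (5, t) h5 hγ
  subst hAB
  have hsubA : A ⊆ gridCells 6 6 := (base_pat0 i j).1 A hA
  have hT2 : shiftS (6 * (i + 1)) (6 * j) (A.image rX) = shiftS (6 * i) (6 * j) (A.image mX) := by
    unfold shiftS
    rw [Finset.image_image, Finset.image_image]
    apply Finset.image_congr
    intro p hp
    have hpg := mem_grid.mp (hsubA hp)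
    obtain ⟨px, py⟩ := p
    simp only at hpg
    simp only [Function.comp_apply, shiftF, rX, mX, Prod.mk.injEq, and_true, true_and]
    omega
  rw [hT2]
  have hb := (border_pat0 A hA).1 ⟨(5, t), h5, rfl⟩
  have hdis : Disjoint A (A.image mX) := Finset.disjoint_left.mpr (fun {c} hc hc' => hb.2 c hc hc')
  have hcardA : A.card = 3 := (base_pat0 i j).2.1 A hA
  have hcardM : (A.image mX).card = 3 := by
    rw [Finset.card_image_of_injOn, hcardA]
    intro p hp q hq hpq
    have h1 := mem_grid.mp (hsubA hp)
    have h2 := mem_grid.mp (hsubA hq)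
    obtain ⟨px, py⟩ := p; obtain ⟨qx, qy⟩ := q
    simp only [mX, Prod.mk.injEq] at hpq ⊢
    simp only at h1 h2
    omega
  exact goodpair_shift _ _ (gp_bridge hb.1 hdis hcardA hcardM)

lemma crossY (i j : ℕ) {A B : Finset (ℕ × ℕ)} (hA : A ∈ pat0 i j) (hB : B ∈ pat0 i (j + 1))
    (t : ℕ) (h5 : (t, 5) ∈ A) (h0 : (t, 0) ∈ B) :
    GoodPair (shiftS (6 * i) (6 * j) A) (shiftS (6 * i) (6 * (j + 1)) B) := by
  rw [pat0_succY i j] at hB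
  obtain ⟨B₀, hB₀, rfl⟩ := Finset.mem_image.mp hB
  have hsub₀ : B₀ ⊆ gridCells 6 6 := (base_pat0 i j).1 B₀ hB₀
  obtain ⟨γ, hγ, hγe⟩ := Finset.mem_image.mp h0
  have hγg := mem_grid.mp (hsub₀ hγ)
  have hγ5 : γ = (t, 5) := by
    obtain ⟨gx, gy⟩ := γ
    simp only [rY, Prod.mk.injEq] at hγe
    simp only at hγg
    simp only [Prod.mk.injEq]
    omega
  subst hγ5
  have hAB : A = B₀ := by
    by_contra hne
    exact (base_pat0 i j).2.2.2.2 A hA B₀ hB₀ hne (t, 5) h5 hγ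
  subst hAB
  have hsubA : A ⊆ gridCells 6 6 := (base_pat0 i j).1 A hA
  have hT2 : shiftS (6 * i) (6 * (j + 1)) (A.image rY) = shiftS (6 * i) (6 * j) (A.image mY) := by
    unfold shiftS
    rw [Finset.image_image, Finset.image_image]
    apply Finset.image_congr
    intro p hp
    have hpg := mem_grid.mp (hsubA hp)
    obtain ⟨px, py⟩ := p
    simp only at hpg
    simp only [Function.comp_apply, shiftF, rY, mY, Prod.mk.injEq, and_true, true_and]
    omega
  rw [hT2]
  have hb := (border_pat0 A hA).2 ⟨(t, 5), h5, rfl⟩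
  have hdis : Disjoint A (A.image mY) := Finset.disjoint_left.mpr (fun {c} hc hc' => hb.2 c hc hc')
  have hcardA : A.card = 3 := (base_pat0 i j).2.1 A hA
  have hcardM : (A.image mY).card = 3 := by
    rw [Finset.card_image_of_injOn, hcardA]
    intro p hp q hq hpq
    have h1 := mem_grid.mp (hsubA hp)
    have h2 := mem_grid.mp (hsubA hq)
    obtain ⟨px, py⟩ := p; obtain ⟨qx, qy⟩ := q
    simp only [mY, Prod.mk.injEq] at hpq ⊢
    simp only at h1 h2
    omega
  exact goodpair_shift _ _ (gp_bridge hb.1 hdis hcardA hcardM)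

/-! ### The main locked tiling -/

set_option maxHeartbeats 2000000 in
theorem big_locked (a b : ℕ) : Locked (mkTiling pat0 base_pat0 a b) := by
  intro T₁ hT₁ T₂ hT₂ hne S₁ S₂ hc1 hc2 hk1 hk2 hds hu
  have hT₁' : T₁ ∈ bigT pat0 a b := hT₁
  have hT₂' : T₂ ∈ bigT pat0 a b := hT₂
  obtain ⟨i, hi, j, hj, A, hA, rfl⟩ := mem_bigT.mp hT₁'
  obtain ⟨i', hi', j', hj', B, hB, rfl⟩ := mem_bigT.mp hT₂'
  by_cases htouch : ∃ p ∈ shiftS (6 * i) (6 * j) A, ∃ q ∈ shiftS (6 * i') (6 * j') B,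
      Adj p q ∨ Adj q p
  · obtain ⟨p, hp, q, hq, hpq⟩ := htouch
    obtain ⟨α, hα, rfl⟩ := Finset.mem_image.mp hp
    obtain ⟨β, hβ, rfl⟩ := Finset.mem_image.mp hq
    have hαg := mem_grid.mp ((base_pat0 i j).1 A hA hα)
    have hβg := mem_grid.mp ((base_pat0 i' j').1 B hB hβ)
    obtain ⟨ax, ay⟩ := α
    obtain ⟨bx, by'⟩ := β
    simp only at hαg hβg
    simp only [Adj, shiftF] at hpq
    have hblock : (i' = i ∧ j' = j) ∨ (i' = i + 1 ∧ j' = j) ∨ (i = i' + 1 ∧ j = j') ∨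
        (j' = j + 1 ∧ i' = i) ∨ (j = j' + 1 ∧ i = i') := by omega
    have hsc : (i' = i ∧ j' = j ∧ (Adj (ax, ay) (bx, by') ∨ Adj (bx, by') (ax, ay))) ∨
        (i' = i + 1 ∧ j' = j ∧ ax = 5 ∧ bx = 0 ∧ by' = ay) ∨
        (i = i' + 1 ∧ j = j' ∧ bx = 5 ∧ ax = 0 ∧ ay = by') ∨
        (j' = j + 1 ∧ i' = i ∧ ay = 5 ∧ by' = 0 ∧ bx = ax) ∨
        (j = j' + 1 ∧ i = i' ∧ by' = 5 ∧ ay = 0 ∧ ax = bx) := by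
      rcases hblock with ⟨h1, h2⟩ | ⟨h1, h2⟩ | ⟨h1, h2⟩ | ⟨h1, h2⟩ | ⟨h1, h2⟩
      · refine Or.inl ⟨h1, h2, ?_⟩
        subst h1; subst h2
        simp only [Adj]
        omega
      · exact Or.inr (Or.inl ⟨h1, h2, by omega, by omega, by omega⟩)
      · exact Or.inr (Or.inr (Or.inl ⟨h1, h2, by omega, by omega, by omega⟩))
      · exact Or.inr (Or.inr (Or.inr (Or.inl ⟨h1, h2, by omega, by omega, by omega⟩)))
      · exact Or.inr (Or.inr (Or.inr (Or.inr ⟨h1, h2, by omega, by omega, by omega⟩)))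
    clear hpq
    rcases hsc with ⟨rfl, rfl, hadj⟩ | ⟨rfl, rfl, h1, h2, h3⟩ | ⟨hieq, hjeq, h1, h2, h3⟩ |
      ⟨rfl, rfl, h1, h2, h3⟩ | ⟨hjeq, hieq, h1, h2, h3⟩
    · -- same block
      have hAB : A ≠ B := fun h => hne (by rw [h])
      have hdAB : Disjoint A B := Finset.disjoint_left.mpr
        (fun {c} hc hc' => (base_pat0 _ _).2.2.2.2 A hA B hB hAB c hc hc')
      have hcA : A.card = 3 := (base_pat0 _ _).2.1 A hA
      have hcB : B.card = 3 := (base_pat0 _ _).2.1 B hB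
      rcases hadj with hadj | hadj
      · exact goodpair_shift _ _
          (gp_bridge (pairs_pat0 A hA B hB hAB ⟨_, hα, _, hβ, hadj⟩) hdAB hcA hcB)
          S₁ S₂ hc1 hc2 hk1 hk2 hds hu
      · have := goodpair_shift _ _
          (gp_bridge (pairs_pat0 B hB A hA hAB.symm ⟨_, hβ, _, hα, hadj⟩) hdAB.symm hcB hcA)
          S₁ S₂ hc1 hc2 hk1 hk2 hds (by rw [hu, Finset.union_comm])
        rw [this, Finset.pair_comm]
    · -- T₂ block to the right of T₁ block
      subst h1; subst h2; subst h3
      exact crossX _ _ hA hB _ hα hβ S₁ S₂ hc1 hc2 hk1 hk2 hds hu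
    · -- T₁ block to the right of T₂ block
      subst hieq; subst hjeq; subst h1; subst h2; subst h3
      have := crossX _ _ hB hA _ hβ hα S₁ S₂ hc1 hc2 hk1 hk2 hds
        (by rw [hu, Finset.union_comm])
      rw [this, Finset.pair_comm]
    · -- T₂ block above T₁ block
      subst h1; subst h2; subst h3
      exact crossY _ _ hA hB _ hα hβ S₁ S₂ hc1 hc2 hk1 hk2 hds hu
    · -- T₁ block above T₂ block
      subst hjeq; subst hieq; subst h1; subst h2; subst h3
      have := crossY _ _ hB hA _ hβ hα S₁ S₂ hc1 hc2 hk1 hk2 hds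
        (by rw [hu, Finset.union_comm])
      rw [this, Finset.pair_comm]
  · -- no adjacency between the two tiles at all
    push_neg at htouch
    have hd := tiling_disjoint (mkTiling pat0 base_pat0 a b) hT₁ hT₂ hne
    have hcT1 := (mkTiling pat0 base_pat0 a b).card_tile _ hT₁
    have hcT2 := (mkTiling pat0 base_pat0 a b).card_tile _ hT₂
    exact nonadj_good hd hcT1 hcT2
      (fun p hp q hq => (htouch p hp q hq).1)
      S₁ S₂ hc1 hc2 hk1 hk2 hds hu

/-! ### The alternative tiling and the main theorem -/

theorem vert_tile_notin : ({(0,0),(0,1),(0,2)} : Finset (ℕ × ℕ)) ∉ tiles00 := by decide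

theorem vert_tile_in : ({(0,0),(0,1),(0,2)} : Finset (ℕ × ℕ)) ∈ vertT := by decide

set_option maxHeartbeats 2000000 in
/-- If the 6×6 grid admits a locked 3-omino tiling, then every 6a×6b grid (a, b ≥ 1)
admits a locked 3-omino tiling. -/
theorem stmt_12
    (h : ∃ T : Tiling 6 6 3, Locked T ∧ ∃ T' : Tiling 6 6 3, T'.tiles ≠ T.tiles)
    (a b : ℕ) (ha : 0 < a) (hb : 0 < b) :
    ∃ T : Tiling (6 * a) (6 * b) 3, Locked T ∧
      ∃ T' : Tiling (6 * a) (6 * b) 3, T'.tiles ≠ T.tiles := by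
  refine ⟨mkTiling pat0 base_pat0 a b, big_locked a b,
    mkTiling (fun _ _ => vertT) (fun _ _ => baseV) a b, ?_⟩
  intro heq
  have hH : ({(0,0),(0,1),(0,2)} : Finset (ℕ × ℕ)) ∈ bigT (fun _ _ => vertT) a b := by
    refine mem_bigT.mpr ⟨0, ha, 0, hb, {(0,0),(0,1),(0,2)}, vert_tile_in, ?_⟩
    rw [show 6 * 0 = 0 from rfl, shiftS_zero]
  have hH2 : ({(0,0),(0,1),(0,2)} : Finset (ℕ × ℕ)) ∈
      (mkTiling (fun _ _ => vertT) (fun _ _ => baseV) a b).tiles := hH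
  rw [heq] at hH2
  have hH' : ({(0,0),(0,1),(0,2)} : Finset (ℕ × ℕ)) ∈ bigT pat0 a b := hH2
  obtain ⟨i, hi, j, hj, A, hA, he⟩ := mem_bigT.mp hH'
  have h00 : ((0 : ℕ), (0 : ℕ)) ∈ ({(0,0),(0,1),(0,2)} : Finset (ℕ × ℕ)) := by decide
  rw [he] at h00
  obtain ⟨α, hα, hαe⟩ := Finset.mem_image.mp h00
  obtain ⟨aax, aay⟩ := α
  simp only [shiftF, Prod.mk.injEq] at hαe
  have hij : i = 0 ∧ j = 0 := by omega
  obtain ⟨rfl, rfl⟩ := hij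
  rw [show 6 * 0 = 0 from rfl, shiftS_zero] at he
  have hA0 : A ∈ tiles00 := by
    have : pat0 0 0 = tiles00 := rfl
    exact this ▸ hA
  rw [← he] at hA0
  exact vert_tile_notin hA0
end

section
/- There exists a tiling of the 10×10 grid by 4-ominoes (25 tiles of 4 cells each) that admits no recombination move, and the 10×10 grid admits more than one 4-omino tiling. -/
-- ===== infrastructure =====

instance instDecAdj (p q : ℕ × ℕ) : Decidable (Adj p q) := by
  unfold Adj; infer_instance

def expand (S R : Finset (ℕ × ℕ)) : Finset (ℕ × ℕ) :=
  R ∪ S.filter (fun b => ∃ a ∈ R, Adj a b)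

def reach (S : Finset (ℕ × ℕ)) (p : ℕ × ℕ) : Finset (ℕ × ℕ) :=
  (expand S)^[S.card] {p}

lemma reach_sound (S : Finset (ℕ × ℕ)) (p : ℕ × ℕ) (hp : p ∈ S) :
    ∀ q ∈ reach S p, Relation.ReflTransGen (fun a b => a ∈ S ∧ b ∈ S ∧ Adj a b) p q := by
  have key : ∀ n (R : Finset (ℕ × ℕ)), R ⊆ S →
      (∀ x ∈ R, Relation.ReflTransGen (fun a b => a ∈ S ∧ b ∈ S ∧ Adj a b) p x) →
      ∀ q ∈ (expand S)^[n] R,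
        Relation.ReflTransGen (fun a b => a ∈ S ∧ b ∈ S ∧ Adj a b) p q := by
    intro n
    induction n with
    | zero => intro R _ h q hq; exact h q hq
    | succ n ih =>
      intro R hRS hR q hq
      rw [Function.iterate_succ_apply] at hq
      refine ih (expand S R) (Finset.union_subset hRS (Finset.filter_subset _ _)) ?_ q hq
      intro x hx
      rcases Finset.mem_union.1 hx with h | h
      · exact hR x h
      · obtain ⟨hxS, a, haR, hadj⟩ := Finset.mem_filter.1 h
        exact (hR a haR).tail ⟨hRS haR, hxS, hadj⟩
  intro q hq
  refine key S.card {p} (by simpa using hp) ?_ q hq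
  intro x hx
  rw [Finset.mem_singleton] at hx
  subst hx
  exact Relation.ReflTransGen.refl

lemma expand_mono_self (S R : Finset (ℕ × ℕ)) : R ⊆ expand S R := Finset.subset_union_left

lemma reach_subset (S : Finset (ℕ × ℕ)) (p : ℕ × ℕ) (hp : p ∈ S) (k : ℕ) :
    (expand S)^[k] {p} ⊆ S := by
  induction k with
  | zero => simpa using hp
  | succ k ih =>
    rw [Function.iterate_succ_apply']
    exact Finset.union_subset ih (Finset.filter_subset _ _)

lemma reach_fixed (S : Finset (ℕ × ℕ)) (p : ℕ × ℕ) (hp : p ∈ S) :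
    expand S (reach S p) = reach S p := by
  set f := expand S with hf
  have mono : ∀ k, f^[k] {p} ⊆ f^[k+1] {p} := by
    intro k
    rw [Function.iterate_succ_apply']
    exact expand_mono_self S _
  have prop : ∀ k, f^[k+1] {p} = f^[k] {p} → ∀ m, k ≤ m → f^[m] {p} = f^[k] {p} := by
    intro k hk
    intro m hm
    induction m, hm using Nat.le_induction with
    | base => rfl
    | succ m hm ih =>
      rw [Function.iterate_succ_apply', ih, ← Function.iterate_succ_apply' f k ({p} : Finset (ℕ × ℕ))]
      exact hk
  by_contra hne
  rw [reach] at hne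
  have hne2 : f^[S.card + 1] {p} ≠ f^[S.card] {p} := by
    rw [Function.iterate_succ_apply' f S.card ({p} : Finset (ℕ × ℕ))]
    exact hne
  have hne' : ∀ k ≤ S.card, f^[k+1] {p} ≠ f^[k] {p} := by
    intro k hk h
    exact hne2 (((prop k h (S.card + 1) (by omega)).trans (prop k h S.card hk).symm))
  have grow : ∀ k ≤ S.card, k + 1 ≤ (f^[k] {p}).card := by
    intro k hk
    induction k with
    | zero => simp
    | succ k ih =>
      have h1 := ih (by omega)
      have hss : f^[k] {p} ⊂ f^[k+1] {p} :=
        Finset.ssubset_iff_subset_ne.2 ⟨mono k, fun h => hne' k (by omega) h.symm⟩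
      have := Finset.card_lt_card hss
      omega
  have h1 := grow S.card le_rfl
  have h2 : (f^[S.card] {p}).card ≤ S.card := Finset.card_le_card (reach_subset S p hp S.card)
  omega

lemma reach_complete (S : Finset (ℕ × ℕ)) (p : ℕ × ℕ) (hp : p ∈ S) {q : ℕ × ℕ}
    (h : Relation.ReflTransGen (fun a b => a ∈ S ∧ b ∈ S ∧ Adj a b) p q) :
    q ∈ reach S p := by
  induction h with
  | refl =>
    have : ∀ k, p ∈ (expand S)^[k] {p} := by
      intro k
      induction k with
      | zero => simp
      | succ k ih =>
        rw [Function.iterate_succ_apply']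
        exact expand_mono_self S _ ih
    exact this S.card
  | tail h1 h2 ih =>
    obtain ⟨hb, hc, hadj⟩ := h2
    rw [← reach_fixed S p hp]
    exact Finset.mem_union_right _ (Finset.mem_filter.2 ⟨hc, _, ih, hadj⟩)

/-- Decidable connectivity check (full version). -/
def connC (S : Finset (ℕ × ℕ)) : Prop := ∀ p ∈ S, ∀ q ∈ S, q ∈ reach S p

instance (S : Finset (ℕ × ℕ)) : Decidable (connC S) := by unfold connC; infer_instance

lemma connectedIn_of_connC {S : Finset (ℕ × ℕ)} (h : connC S) : ConnectedIn S :=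
  fun p hp q hq => reach_sound S p hp q (h p hp q hq)

/-- Cheap decidable connectivity check (one root). -/
def connD (S : Finset (ℕ × ℕ)) : Prop := ∃ p ∈ S, ∀ q ∈ S, q ∈ reach S p

instance (S : Finset (ℕ × ℕ)) : Decidable (connD S) := by unfold connD; infer_instance

lemma connD_of_connectedIn {S : Finset (ℕ × ℕ)} (h : ConnectedIn S) (hne : S.Nonempty) :
    connD S := by
  obtain ⟨p, hp⟩ := hne
  exact ⟨p, hp, fun q hq => reach_complete S p hp (h p hp q hq)⟩

/-- Touching tiles. -/
def Touch (A B : Finset (ℕ × ℕ)) : Prop := ∃ a ∈ A, ∃ b ∈ B, Adj a b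

instance (A B : Finset (ℕ × ℕ)) : Decidable (Touch A B) := by unfold Touch; infer_instance

lemma subset_of_not_touch {A B S : Finset (ℕ × ℕ)} (hT : ¬ Touch A B)
    (hS : S ⊆ A ∪ B) (hconn : ConnectedIn S) {p : ℕ × ℕ} (hp : p ∈ S) (hpA : p ∈ A) :
    S ⊆ A := by
  intro q hq
  have h := hconn p hp q hq
  clear hq
  induction h with
  | refl => exact hpA
  | tail h1 h2 ih =>
    obtain ⟨hb, hc, hadj⟩ := h2
    rcases Finset.mem_union.1 (hS hc) with h | h
    · exact h
    · exact absurd ⟨_, ih, _, h, hadj⟩ hT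


lemma tiles_disjoint {m n t : ℕ} (T : Tiling m n t) {T₁ T₂ : Finset (ℕ × ℕ)}
    (h₁ : T₁ ∈ T.tiles) (h₂ : T₂ ∈ T.tiles) (hne : T₁ ≠ T₂) : Disjoint T₁ T₂ := by
  rw [Finset.disjoint_left]
  intro c hc1 hc2
  have hcg : c ∈ gridCells m n := T.subset T₁ h₁ hc1
  obtain ⟨U, _, huniq⟩ := T.covers c hcg
  exact hne ((huniq T₁ ⟨h₁, hc1⟩).trans (huniq T₂ ⟨h₂, hc2⟩).symm)

lemma covers_of {m n : ℕ} (tiles : Finset (Finset (ℕ × ℕ)))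
    (hex : ∀ c ∈ gridCells m n, ∃ T ∈ tiles, c ∈ T)
    (huniq : ∀ T₁ ∈ tiles, ∀ T₂ ∈ tiles, ∀ c ∈ T₁, c ∈ T₂ → T₁ = T₂) :
    ∀ c ∈ gridCells m n, ∃! T, T ∈ tiles ∧ c ∈ T := by
  intro c hc
  obtain ⟨T, hT, hcT⟩ := hex c hc
  exact ⟨T, ⟨hT, hcT⟩, fun U hU => huniq U hU.1 T hT c hU.2 hcT⟩

lemma far_pair {A B S₁ S₂ : Finset (ℕ × ℕ)} (hAB : Disjoint A B) (hT : ¬ Touch A B)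
    (cA : A.card = 4) (cB : B.card = 4) (c1 : S₁.card = 4) (c2 : S₂.card = 4)
    (h1 : ConnectedIn S₁) (h2 : ConnectedIn S₂) (hd : Disjoint S₁ S₂)
    (hu : S₁ ∪ S₂ = A ∪ B) : ({S₁, S₂} : Finset (Finset (ℕ × ℕ))) = {A, B} := by
  have hT' : ¬ Touch B A := fun ⟨a, ha, b, hb, hadj⟩ => hT ⟨b, hb, a, ha, adj_symm hadj⟩
  have hne1 : S₁.Nonempty := Finset.card_pos.1 (by omega)
  obtain ⟨p, hp⟩ := hne1
  have hsub1 : S₁ ⊆ A ∪ B := hu ▸ Finset.subset_union_left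
  have hS2eq : S₂ = (A ∪ B) \ S₁ := by
    rw [← hu]; exact (Finset.union_sdiff_cancel_left hd).symm
  rcases Finset.mem_union.1 (hsub1 hp) with hpA | hpB
  · have hS1A : S₁ ⊆ A := subset_of_not_touch hT hsub1 h1 hp hpA
    have hS1 : S₁ = A := Finset.eq_of_subset_of_card_le hS1A (by omega)
    have hS2 : S₂ = B := by
      rw [hS2eq, hS1, Finset.union_sdiff_cancel_left hAB]
    rw [hS1, hS2]
  · have hBA : S₁ ⊆ B ∪ A := by rwa [Finset.union_comm]
    have hS1B : S₁ ⊆ B := subset_of_not_touch hT' hBA h1 hp hpB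
    have hS1 : S₁ = B := Finset.eq_of_subset_of_card_le hS1B (by omega)
    have hS2 : S₂ = A := by
      rw [hS2eq, hS1, Finset.union_comm, Finset.union_sdiff_cancel_left hAB.symm]
    rw [hS1, hS2, Finset.pair_comm]

/-- Every cell has a neighbour: cheap necessary condition for connectivity. -/
def nbr (S : Finset (ℕ × ℕ)) : Prop := ∀ a ∈ S, ∃ b ∈ S, Adj a b

instance (S : Finset (ℕ × ℕ)) : Decidable (nbr S) := by unfold nbr; infer_instance

lemma nbr_of_connectedIn {S : Finset (ℕ × ℕ)} (h : ConnectedIn S) (hc : 2 ≤ S.card) :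
    nbr S := by
  intro a ha
  obtain ⟨q, hq, hqa⟩ := Finset.exists_mem_ne (s := S) (by omega) a
  rcases (h a ha q hq).cases_head with heq | ⟨c, hac, _⟩
  · exact absurd heq.symm hqa
  · exact ⟨c, hac.2.1, hac.2.2⟩

def enc (p : ℕ × ℕ) : ℕ := p.1 * 10 + p.2

/-- The decidable lockedness check. -/
def LChk1 (tiles : Finset (Finset (ℕ × ℕ))) (T₁ : Finset (ℕ × ℕ)) : Prop :=
  ∀ T₂ ∈ tiles, T₁ ≠ T₂ → Touch T₁ T₂ →
    ∀ S₁ ∈ (T₁ ∪ T₂).powersetCard 4,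
      (S₁.image enc).min = ((T₁ ∪ T₂).image enc).min →
      nbr S₁ → nbr ((T₁ ∪ T₂) \ S₁) → connD S₁ → connD ((T₁ ∪ T₂) \ S₁) →
      ({S₁, (T₁ ∪ T₂) \ S₁} : Finset (Finset (ℕ × ℕ))) = {T₁, T₂}

instance (tiles : Finset (Finset (ℕ × ℕ))) (T₁ : Finset (ℕ × ℕ)) :
    Decidable (LChk1 tiles T₁) := by
  unfold LChk1; infer_instance

def LChk (tiles : Finset (Finset (ℕ × ℕ))) : Prop :=
  ∀ T₁ ∈ tiles, LChk1 tiles T₁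

lemma locked_of_check (T : Tiling 10 10 4) (hchk : LChk T.tiles) : Locked T := by
  intro T₁ h₁ T₂ h₂ hne S₁ S₂ c1 c2 hc1 hc2 hd hu
  have hdisj : Disjoint T₁ T₂ := tiles_disjoint T h₁ h₂ hne
  by_cases ht : Touch T₁ T₂
  · have hS2eq : S₂ = (T₁ ∪ T₂) \ S₁ := by
      rw [← hu]; exact (Finset.union_sdiff_cancel_left hd).symm
    have hS1eq : S₁ = (T₁ ∪ T₂) \ S₂ := by
      rw [← hu]; exact (Finset.union_sdiff_cancel_right hd).symm
    have hmem1 : S₁ ∈ (T₁ ∪ T₂).powersetCard 4 :=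
      Finset.mem_powersetCard.2 ⟨hu ▸ Finset.subset_union_left, c1⟩
    have hmem2 : S₂ ∈ (T₁ ∪ T₂).powersetCard 4 :=
      Finset.mem_powersetCard.2 ⟨hu ▸ Finset.subset_union_right, c2⟩
    have hn1 : nbr S₁ := nbr_of_connectedIn (S := S₁) hc1 (by omega)
    have hn2 : nbr S₂ := nbr_of_connectedIn (S := S₂) hc2 (by omega)
    have hd1 : connD S₁ := connD_of_connectedIn hc1 (Finset.card_pos.1 (by omega))
    have hd2 : connD S₂ := connD_of_connectedIn hc2 (Finset.card_pos.1 (by omega))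
    have himg : ((T₁ ∪ T₂).image enc).min = (S₁.image enc).min ⊓ (S₂.image enc).min := by
      rw [← hu, Finset.image_union, Finset.min_union]
    rcases le_total ((S₁.image enc).min) ((S₂.image enc).min) with hle | hle
    · have hmin : (S₁.image enc).min = ((T₁ ∪ T₂).image enc).min := by
        rw [himg, inf_eq_left.2 hle]
      have := hchk T₁ h₁ T₂ h₂ hne ht S₁ hmem1 hmin hn1 (hS2eq ▸ hn2) hd1 (hS2eq ▸ hd2)
      rwa [hS2eq]
    · have hmin : (S₂.image enc).min = ((T₁ ∪ T₂).image enc).min := by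
        rw [himg, inf_eq_right.2 hle]
      have := hchk T₁ h₁ T₂ h₂ hne ht S₂ hmem2 hmin hn2 (hS1eq ▸ hn1) hd2 (hS1eq ▸ hd1)
      rw [← hS1eq] at this
      rw [Finset.pair_comm]
      exact this
  · exact far_pair hdisj ht (T.card_tile T₁ h₁) (T.card_tile T₂ h₂) c1 c2 hc1 hc2 hd hu

def lockedTiles : Finset (Finset (ℕ × ℕ)) :=
  {{(0, 0), (0, 1), (0, 2), (1, 1)},
  {(0, 3), (0, 4), (1, 4), (1, 5)},
  {(0, 5), (0, 6), (0, 7), (0, 8)},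
  {(0, 9), (1, 8), (1, 9), (2, 9)},
  {(1, 0), (2, 0), (3, 0), (4, 0)},
  {(1, 2), (1, 3), (2, 2), (2, 3)},
  {(1, 6), (1, 7), (2, 5), (2, 6)},
  {(2, 1), (3, 1), (3, 2), (4, 2)},
  {(2, 4), (3, 3), (3, 4), (4, 3)},
  {(2, 7), (2, 8), (3, 7), (3, 8)},
  {(3, 5), (3, 6), (4, 6), (4, 7)},
  {(3, 9), (4, 8), (4, 9), (5, 8)},
  {(4, 1), (5, 0), (5, 1), (6, 0)},
  {(4, 4), (4, 5), (5, 4), (5, 5)},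
  {(5, 2), (5, 3), (6, 3), (6, 4)},
  {(5, 6), (6, 5), (6, 6), (7, 5)},
  {(5, 7), (6, 7), (6, 8), (7, 8)},
  {(5, 9), (6, 9), (7, 9), (8, 9)},
  {(6, 1), (6, 2), (7, 1), (7, 2)},
  {(7, 0), (8, 0), (8, 1), (9, 0)},
  {(7, 3), (7, 4), (8, 2), (8, 3)},
  {(7, 6), (7, 7), (8, 6), (8, 7)},
  {(8, 4), (8, 5), (9, 5), (9, 6)},
  {(8, 8), (9, 7), (9, 8), (9, 9)},
  {(9, 1), (9, 2), (9, 3), (9, 4)}}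

def squareTiles : Finset (Finset (ℕ × ℕ)) :=
  {{(0, 0), (0, 1), (1, 0), (1, 1)},
  {(0, 2), (0, 3), (1, 2), (1, 3)},
  {(0, 4), (0, 5), (1, 4), (1, 5)},
  {(0, 6), (0, 7), (1, 6), (1, 7)},
  {(0, 8), (0, 9), (1, 8), (1, 9)},
  {(2, 0), (2, 1), (3, 0), (3, 1)},
  {(2, 2), (2, 3), (3, 2), (3, 3)},
  {(2, 4), (2, 5), (3, 4), (3, 5)},
  {(2, 6), (2, 7), (3, 6), (3, 7)},
  {(2, 8), (2, 9), (3, 8), (3, 9)},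
  {(4, 0), (4, 1), (5, 0), (5, 1)},
  {(4, 2), (4, 3), (5, 2), (5, 3)},
  {(4, 4), (4, 5), (5, 4), (5, 5)},
  {(4, 6), (4, 7), (5, 6), (5, 7)},
  {(4, 8), (4, 9), (5, 8), (5, 9)},
  {(6, 0), (6, 1), (7, 0), (7, 1)},
  {(6, 2), (6, 3), (7, 2), (7, 3)},
  {(6, 4), (6, 5), (7, 4), (7, 5)},
  {(6, 6), (6, 7), (7, 6), (7, 7)},
  {(6, 8), (6, 9), (7, 8), (7, 9)},
  {(8, 0), (8, 1), (9, 0), (9, 1)},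
  {(8, 2), (8, 3), (9, 2), (9, 3)},
  {(8, 4), (8, 5), (9, 4), (9, 5)},
  {(8, 6), (8, 7), (9, 6), (9, 7)},
  {(8, 8), (8, 9), (9, 8), (9, 9)}}

set_option maxHeartbeats 10000000 in
set_option maxRecDepth 100000 in
lemma chk0 : LChk1 lockedTiles ({(0, 0), (0, 1), (0, 2), (1, 1)} : Finset (ℕ × ℕ)) := by decide

set_option maxHeartbeats 10000000 in
set_option maxRecDepth 100000 in
lemma chk1 : LChk1 lockedTiles ({(0, 3), (0, 4), (1, 4), (1, 5)} : Finset (ℕ × ℕ)) := by decide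

set_option maxHeartbeats 10000000 in
set_option maxRecDepth 100000 in
lemma chk2 : LChk1 lockedTiles ({(0, 5), (0, 6), (0, 7), (0, 8)} : Finset (ℕ × ℕ)) := by decide

set_option maxHeartbeats 10000000 in
set_option maxRecDepth 100000 in
lemma chk3 : LChk1 lockedTiles ({(0, 9), (1, 8), (1, 9), (2, 9)} : Finset (ℕ × ℕ)) := by decide

set_option maxHeartbeats 10000000 in
set_option maxRecDepth 100000 in
lemma chk4 : LChk1 lockedTiles ({(1, 0), (2, 0), (3, 0), (4, 0)} : Finset (ℕ × ℕ)) := by decide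

set_option maxHeartbeats 10000000 in
set_option maxRecDepth 100000 in
lemma chk5 : LChk1 lockedTiles ({(1, 2), (1, 3), (2, 2), (2, 3)} : Finset (ℕ × ℕ)) := by decide

set_option maxHeartbeats 10000000 in
set_option maxRecDepth 100000 in
lemma chk6 : LChk1 lockedTiles ({(1, 6), (1, 7), (2, 5), (2, 6)} : Finset (ℕ × ℕ)) := by decide

set_option maxHeartbeats 10000000 in
set_option maxRecDepth 100000 in
lemma chk7 : LChk1 lockedTiles ({(2, 1), (3, 1), (3, 2), (4, 2)} : Finset (ℕ × ℕ)) := by decide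

set_option maxHeartbeats 10000000 in
set_option maxRecDepth 100000 in
lemma chk8 : LChk1 lockedTiles ({(2, 4), (3, 3), (3, 4), (4, 3)} : Finset (ℕ × ℕ)) := by decide

set_option maxHeartbeats 10000000 in
set_option maxRecDepth 100000 in
lemma chk9 : LChk1 lockedTiles ({(2, 7), (2, 8), (3, 7), (3, 8)} : Finset (ℕ × ℕ)) := by decide

set_option maxHeartbeats 10000000 in
set_option maxRecDepth 100000 in
lemma chk10 : LChk1 lockedTiles ({(3, 5), (3, 6), (4, 6), (4, 7)} : Finset (ℕ × ℕ)) := by decide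

set_option maxHeartbeats 10000000 in
set_option maxRecDepth 100000 in
lemma chk11 : LChk1 lockedTiles ({(3, 9), (4, 8), (4, 9), (5, 8)} : Finset (ℕ × ℕ)) := by decide

set_option maxHeartbeats 10000000 in
set_option maxRecDepth 100000 in
lemma chk12 : LChk1 lockedTiles ({(4, 1), (5, 0), (5, 1), (6, 0)} : Finset (ℕ × ℕ)) := by decide

set_option maxHeartbeats 10000000 in
set_option maxRecDepth 100000 in
lemma chk13 : LChk1 lockedTiles ({(4, 4), (4, 5), (5, 4), (5, 5)} : Finset (ℕ × ℕ)) := by decide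

set_option maxHeartbeats 10000000 in
set_option maxRecDepth 100000 in
lemma chk14 : LChk1 lockedTiles ({(5, 2), (5, 3), (6, 3), (6, 4)} : Finset (ℕ × ℕ)) := by decide

set_option maxHeartbeats 10000000 in
set_option maxRecDepth 100000 in
lemma chk15 : LChk1 lockedTiles ({(5, 6), (6, 5), (6, 6), (7, 5)} : Finset (ℕ × ℕ)) := by decide

set_option maxHeartbeats 10000000 in
set_option maxRecDepth 100000 in
lemma chk16 : LChk1 lockedTiles ({(5, 7), (6, 7), (6, 8), (7, 8)} : Finset (ℕ × ℕ)) := by decide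

set_option maxHeartbeats 10000000 in
set_option maxRecDepth 100000 in
lemma chk17 : LChk1 lockedTiles ({(5, 9), (6, 9), (7, 9), (8, 9)} : Finset (ℕ × ℕ)) := by decide

set_option maxHeartbeats 10000000 in
set_option maxRecDepth 100000 in
lemma chk18 : LChk1 lockedTiles ({(6, 1), (6, 2), (7, 1), (7, 2)} : Finset (ℕ × ℕ)) := by decide

set_option maxHeartbeats 10000000 in
set_option maxRecDepth 100000 in
lemma chk19 : LChk1 lockedTiles ({(7, 0), (8, 0), (8, 1), (9, 0)} : Finset (ℕ × ℕ)) := by decide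

set_option maxHeartbeats 10000000 in
set_option maxRecDepth 100000 in
lemma chk20 : LChk1 lockedTiles ({(7, 3), (7, 4), (8, 2), (8, 3)} : Finset (ℕ × ℕ)) := by decide

set_option maxHeartbeats 10000000 in
set_option maxRecDepth 100000 in
lemma chk21 : LChk1 lockedTiles ({(7, 6), (7, 7), (8, 6), (8, 7)} : Finset (ℕ × ℕ)) := by decide

set_option maxHeartbeats 10000000 in
set_option maxRecDepth 100000 in
lemma chk22 : LChk1 lockedTiles ({(8, 4), (8, 5), (9, 5), (9, 6)} : Finset (ℕ × ℕ)) := by decide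

set_option maxHeartbeats 10000000 in
set_option maxRecDepth 100000 in
lemma chk23 : LChk1 lockedTiles ({(8, 8), (9, 7), (9, 8), (9, 9)} : Finset (ℕ × ℕ)) := by decide

set_option maxHeartbeats 10000000 in
set_option maxRecDepth 100000 in
lemma chk24 : LChk1 lockedTiles ({(9, 1), (9, 2), (9, 3), (9, 4)} : Finset (ℕ × ℕ)) := by decide

lemma big_check : LChk lockedTiles := by
  intro T₁ h
  simp only [lockedTiles, Finset.mem_insert, Finset.mem_singleton] at h
  rcases h with rfl|rfl|rfl|rfl|rfl|rfl|rfl|rfl|rfl|rfl|rfl|rfl|rfl|rfl|rfl|rfl|rfl|rfl|rfl|rfl|rfl|rfl|rfl|rfl|rfl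
  exacts [chk0, chk1, chk2, chk3, chk4, chk5, chk6, chk7, chk8, chk9, chk10, chk11, chk12, chk13, chk14, chk15, chk16, chk17, chk18, chk19, chk20, chk21, chk22, chk23, chk24]

set_option maxHeartbeats 40000000 in
set_option maxRecDepth 100000 in
lemma locked_ex : ∀ c ∈ gridCells 10 10, ∃ T ∈ lockedTiles, c ∈ T := by decide

set_option maxHeartbeats 40000000 in
set_option maxRecDepth 100000 in
lemma locked_uniq : ∀ T₁ ∈ lockedTiles, ∀ T₂ ∈ lockedTiles, ∀ c ∈ T₁, c ∈ T₂ → T₁ = T₂ := by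
  decide

set_option maxHeartbeats 40000000 in
set_option maxRecDepth 100000 in
lemma locked_sub : ∀ T ∈ lockedTiles, T ⊆ gridCells 10 10 := by decide

set_option maxHeartbeats 40000000 in
set_option maxRecDepth 100000 in
lemma locked_card : ∀ T ∈ lockedTiles, T.card = 4 := by decide

set_option maxHeartbeats 40000000 in
set_option maxRecDepth 100000 in
lemma locked_conn : ∀ T ∈ lockedTiles, connC T := by decide

def lockedTiling : Tiling 10 10 4 where
  tiles := lockedTiles
  covers := covers_of lockedTiles locked_ex locked_uniq
  subset := locked_sub
  card_tile := locked_card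
  conn := fun T hT => connectedIn_of_connC (locked_conn T hT)

set_option maxHeartbeats 40000000 in
set_option maxRecDepth 100000 in
lemma square_ex : ∀ c ∈ gridCells 10 10, ∃ T ∈ squareTiles, c ∈ T := by decide

set_option maxHeartbeats 40000000 in
set_option maxRecDepth 100000 in
lemma square_uniq : ∀ T₁ ∈ squareTiles, ∀ T₂ ∈ squareTiles, ∀ c ∈ T₁, c ∈ T₂ → T₁ = T₂ := by
  decide

set_option maxHeartbeats 40000000 in
set_option maxRecDepth 100000 in
lemma square_sub : ∀ T ∈ squareTiles, T ⊆ gridCells 10 10 := by decide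

set_option maxHeartbeats 40000000 in
set_option maxRecDepth 100000 in
lemma square_card : ∀ T ∈ squareTiles, T.card = 4 := by decide

set_option maxHeartbeats 40000000 in
set_option maxRecDepth 100000 in
lemma square_conn : ∀ T ∈ squareTiles, connC T := by decide

def squareTiling : Tiling 10 10 4 where
  tiles := squareTiles
  covers := covers_of squareTiles square_ex square_uniq
  subset := square_sub
  card_tile := square_card
  conn := fun T hT => connectedIn_of_connC (square_conn T hT)

set_option maxHeartbeats 40000000 in
set_option maxRecDepth 100000 in
lemma tiles_ne : squareTiles ≠ lockedTiles := by decide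

set_option maxHeartbeats 40000000 in
set_option maxRecDepth 100000 in
lemma locked_card25 : lockedTiles.card = 25 := by decide

/-- There is a locked 4-omino tiling of the 10×10 grid (with 25 tiles), and the 10×10
grid admits more than one 4-omino tiling. -/
theorem stmt_13 :
    ∃ T : Tiling 10 10 4, T.tiles.card = 25 ∧ Locked T ∧
      ∃ T' : Tiling 10 10 4, T'.tiles ≠ T.tiles := by
  exact ⟨lockedTiling, locked_card25, locked_of_check lockedTiling big_check,
    squareTiling, tiles_ne⟩
end
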